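/- (Full elimination in the verification of the Kawashima condition.) Suppose v ∈ ℝ⁶ and λ ∈ ℝ satisfy (B − λA)v = 0 and v₄ = v₅ = v₆ = 0. Then v = 0; in the proof, after deducing v₂ = v₃ = 0, the second row of the relation forces p_ψ v₁ = 0, and since p_ψ > 0 one concludes v₁ = 0. -/

import Mathlib

theorem kawashima_full_elimination
    (θ pψ τ0 τ1 τ2 : ℝ)
    (hθ : 0 < θ) (hpψ : 0 < pψ)
    (pψψ pθψ pθθ pθ : ℝ)
    (A B : Matrix (Fin 6) (Fin 6) ℝ)
    (hA : A = !![θ⁻¹ * pψψ, 0, -pψ + θ * pθψ, 0, 0, 0;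
                 0, pψ, 0, 0, 0, 0;
                 -pψ + θ * pθψ, 0, θ * pθθ, 0, 0, 0;
                 0, 0, 0, τ1 * θ⁻¹ * pψ, 0, 0;
                 0, 0, 0, 0, τ2 * θ⁻¹ * pψ, 0;
                 0, 0, 0, 0, 0, τ0 * θ⁻¹ * pψ])
    (hB : B = !![0, pψ, 0, 0, 0, 0;
                 pψ, 0, θ^2 * pθ, θ, θ, 0;
                 0, θ^2 * pθ, 0, 0, 0, θ^2;
                 0, θ, 0, 0, 0, 0;
                 0, θ, 0, 0, 0, 0;
                 0, 0, θ^2, 0, 0, 0])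
    (lam : ℝ) (v : Fin 6 → ℝ)
    (heig : (B - lam • A).mulVec v = 0)
    (h4 : v 3 = 0) (h5 : v 4 = 0) (h6 : v 5 = 0) :
    v = 0 := by
  subst hA hB
  have row (i : Fin 6) := congrFun heig i
  simp only [Matrix.mulVec, dotProduct, Fin.sum_univ_six, h4, h5, h6] at row
  have row3 : θ * v 1 = 0 := by simpa using row 3
  have row5 : θ ^ 2 * v 2 = 0 := by simpa using row 5
  have row1 : pψ * v 0 - lam * pψ * v 1 + θ ^ 2 * pθ * v 2 = 0 := by
    simpa [sub_eq_add_neg] using row 1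
  have hv1 : v 1 = 0 := (mul_eq_zero_iff_left hθ.ne').mp row3
  have hv2 : v 2 = 0 := (mul_eq_zero_iff_left (pow_ne_zero 2 hθ.ne')).mp row5
  have hv0 : v 0 = 0 :=
    (mul_eq_zero_iff_left hpψ.ne').mp (by simpa [hv1, hv2] using row1)
  ext i
  fin_cases i <;> assumption
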